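/- The reduction map Π : {1,...,2^{n+1}} → {1,...,2^n} given by reduction modulo 2^n is a homomorphism from the Laver table of order 2^{n+1} to the Laver table of order 2^n: Π(p ⋆_{n+1} q) = Π(p) ⋆ₙ Π(q). -/

import Mathlib

/-!
Both tables are generated by the same recursion, `p ⋆ (q + 1) = (p ⋆ q) ⋆ (p + 1)`, which runs
by downward induction on `p` and, for fixed `p`, upward induction on `q`; it terminates because
`p < p ⋆ q` for `p < N`, and the top row is the identity. Reduction modulo a divisor `N` of `M`
commutes with `p ↦ p + 1` on `{1, …, M}`, sends the top row to the top row, and so carries each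
step of the recursion in the big table to the corresponding step in the small one.
-/

def LaverAxioms (N : ℕ) (star : ℕ → ℕ → ℕ) : Prop :=
  (∀ p q, p ∈ Set.Icc 1 N → q ∈ Set.Icc 1 N → star p q ∈ Set.Icc 1 N) ∧
  (∀ p ∈ Set.Icc 1 N, star p 1 = p % N + 1) ∧
  (∀ p q, p ∈ Set.Icc 1 N → q ∈ Set.Icc 1 N →
    star p (star q 1) = star (star p q) (star p 1))

open Set

@[elab_as_elim]
theorem Nat.le_induction_Icc {a N : ℕ} {P : ℕ → Prop} (base : P a)
    (succ : ∀ q, a ≤ q → q < N → P q → P (q + 1)) (q : ℕ) (hq : q ∈ Icc a N) : P q := by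
  obtain ⟨haq, hqN⟩ := hq
  induction q, haq using Nat.le_induction with
  | base => exact base
  | succ q haq ih => exact succ q haq (by omega) (ih (by omega))

/-- The paper's `Π`: the representative of `p` modulo `N` in `{1, …, N}`. -/
def laverProj (N p : ℕ) : ℕ := (p - 1) % N + 1

section laverProj

variable {N M : ℕ}

theorem laverProj_mem_Icc (hN : 0 < N) (p : ℕ) : laverProj N p ∈ Icc 1 N :=
  ⟨by simp [laverProj], Nat.mod_lt _ hN⟩

@[simp]
theorem laverProj_one : laverProj N 1 = 1 := by simp [laverProj]

theorem laverProj_of_dvd (hNM : N ∣ M) (hM : 0 < M) : laverProj N M = N := by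
  have hN := Nat.pos_of_dvd_of_pos hNM hM
  obtain ⟨k, rfl⟩ := hNM
  obtain ⟨k, rfl⟩ := Nat.exists_eq_add_of_lt (Nat.pos_of_mul_pos_left hM)
  rw [laverProj,
    show N * (0 + k + 1) - 1 = (N - 1) + N * k by rw [Nat.zero_add, Nat.mul_add_one]; omega,
    Nat.add_mul_mod_self_left, Nat.mod_eq_of_lt (by omega)]
  omega

theorem laverProj_mod_add_one (hNM : N ∣ M) {p : ℕ} (hp : 1 ≤ p) :
    laverProj N (p % M + 1) = laverProj N p % N + 1 := by
  obtain ⟨p, rfl⟩ := Nat.exists_eq_add_of_le hp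
  simp [laverProj, Nat.mod_mod_of_dvd _ hNM, Nat.add_comm 1 p]

end laverProj

namespace LaverAxioms

variable {N : ℕ} {star : ℕ → ℕ → ℕ}

theorem star_one_of_lt (h : LaverAxioms N star) {p : ℕ} (hp : 1 ≤ p) (hpN : p < N) :
    star p 1 = p + 1 := by
  rw [h.2.1 p ⟨hp, hpN.le⟩, Nat.mod_eq_of_lt hpN]

theorem star_succ (h : LaverAxioms N star) {p q : ℕ} (hp : p ∈ Icc 1 N) (hq : 1 ≤ q)
    (hqN : q < N) : star p (q + 1) = star (star p q) (star p 1) := by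
  rw [← h.star_one_of_lt hq hqN]
  exact h.2.2 p q hp ⟨hq, hqN.le⟩

theorem star_self (h : LaverAxioms N star) {q : ℕ} (hq : q ∈ Icc 1 N) : star N q = q := by
  have hN : N ∈ Icc 1 N := ⟨hq.1.trans hq.2, le_rfl⟩
  have hN1 : star N 1 = 1 := by rw [h.2.1 N hN, Nat.mod_self]
  refine Nat.le_induction_Icc hN1 (fun q hq hqN ih => ?_) q hq
  rw [h.star_succ hN hq hqN, ih, hN1, h.star_one_of_lt hq hqN]

theorem lt_star (h : LaverAxioms N star) {p q : ℕ} (hp : 1 ≤ p) (hpN : p < N)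
    (hq : q ∈ Icc 1 N) : p < star p q := by
  induction p using Nat.strong_decreasing_induction generalizing q with
  | base => exact ⟨N, fun m hm _ hmN => by omega⟩
  | step p ihp =>
    have hpmem : p ∈ Icc 1 N := ⟨hp, hpN.le⟩
    refine Nat.le_induction_Icc ?_ (fun q hq hqN ih => ?_) q hq
    · rw [h.star_one_of_lt hp hpN]
      exact p.lt_succ_self
    rw [h.star_succ hpmem hq hqN, h.star_one_of_lt hp hpN]
    rcases (h.1 p q hpmem ⟨hq, hqN.le⟩).2.lt_or_eq with hr | hr
    · exact ih.trans (ihp _ ih (by omega) hr ⟨by omega, hpN⟩)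
    · rw [hr, h.star_self ⟨by omega, hpN⟩]
      exact p.lt_succ_self

theorem laverProj_star {M : ℕ} {starBig : ℕ → ℕ → ℕ} (hB : LaverAxioms M starBig)
    (hS : LaverAxioms N star) (hNM : N ∣ M) {p q : ℕ} (hp : p ∈ Icc 1 M) (hq : q ∈ Icc 1 M) :
    laverProj N (starBig p q) = star (laverProj N p) (laverProj N q) := by
  have hM : 0 < M := by have := hp.1.trans hp.2; omega
  have hN : 0 < N := Nat.pos_of_dvd_of_pos hNM hM
  have laverProj_star_one (x : ℕ) (hx : x ∈ Icc 1 M) :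
      laverProj N (starBig x 1) = star (laverProj N x) 1 := by
    rw [hB.2.1 x hx, hS.2.1 _ (laverProj_mem_Icc hN x), laverProj_mod_add_one hNM hx.1]
  obtain ⟨hp, hpM⟩ := hp
  induction p using Nat.strong_decreasing_induction generalizing q with
  | base => exact ⟨M, fun m hm _ hmM => by omega⟩
  | step p ihp =>
    rcases hpM.lt_or_eq with hpM | hpM
    · have hpmem : p ∈ Icc 1 M := ⟨hp, hpM.le⟩
      refine Nat.le_induction_Icc ?_ (fun q hq hqM ih => ?_) q hq
      · rw [laverProj_one]
        exact laverProj_star_one p hpmem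
      have hqmem : q ∈ Icc 1 M := ⟨hq, hqM.le⟩
      have hr := hB.lt_star hp hpM hqmem
      -- `Π(p ⋆ (q+1)) = Π((p ⋆ q) ⋆ (p ⋆ 1)) = (Πp ⋆ Πq) ⋆ (Πp ⋆ 1) = Πp ⋆ (Πq ⋆ 1) = Πp ⋆ Π(q+1)`
      rw [hB.star_succ hpmem hq hqM,
        ihp _ hr (hB.1 p 1 hpmem ⟨le_rfl, by omega⟩) (by omega) (hB.1 p q hpmem hqmem).2, ih,
        laverProj_star_one p hpmem,
        ← hS.2.2 _ _ (laverProj_mem_Icc hN p) (laverProj_mem_Icc hN q),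
        ← laverProj_star_one q hqmem, hB.star_one_of_lt hq hqM]
    · rw [hpM, hB.star_self hq, laverProj_of_dvd hNM hM, hS.star_self (laverProj_mem_Icc hN q)]

end LaverAxioms

/-- reduction modulo 2^n, Π(p) = (p-1) % 2^n + 1, is a homomorphism from
the Laver table of order 2^{n+1} to the Laver table of order 2^n. -/
theorem laver_reduction_hom (n : ℕ) (starBig starSmall : ℕ → ℕ → ℕ)
    (hB : LaverAxioms (2 ^ (n + 1)) starBig) (hS : LaverAxioms (2 ^ n) starSmall) :
    ∀ p ∈ Set.Icc 1 (2 ^ (n + 1)), ∀ q ∈ Set.Icc 1 (2 ^ (n + 1)),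
      (starBig p q - 1) % 2 ^ n + 1 =
        starSmall ((p - 1) % 2 ^ n + 1) ((q - 1) % 2 ^ n + 1) :=
  fun _ hp _ hq => hB.laverProj_star hS (pow_dvd_pow 2 n.le_succ) hp hq
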